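/- arXiv:1707.02084 — 4 statements merged into one kernel-verified Lean document; each statement's English description precedes it below -/
import Mathlib

section
/- Let g be a Lie algebra generated by its extremal elements, with symmetric associative extremal form g such that g_x = g(x,·) for each extremal x. If x, y are extremal elements with [x,y] ≠ 0 and z := [x,y] is extremal with [x,z] = 0 = [y,z] (case (d) of the two-generator classification), then the subalgebra generated by x and y is linearly spanned by extremal elements; more generally, if x and y do not commute then x, y, and exp(x,1)(y) = y + [x,y] + g_x(y)x linearly span the subalgebra ⟨x,y⟩ generated by x and y. -/
/-! The span of `x`, `y`, `[x,y]` is closed under the bracket as soon as `[x,[x,y]]` and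
`[y,[x,y]]` lie in it, so it is the subalgebra generated by `x` and `y`; in case (d) both brackets
vanish and the three spanning vectors are extremal. Replacing `[x,y]` by
`exp(x,1)(y) = y + [x,y] + g_x(y)x` changes it only by a combination of `x` and `y`, which does
not change the span. -/

/-- An extremal element of a Lie algebra: a nonzero `x` admitting a linear functional `gx`
with `[x,[x,y]] = 2gx(y)x` and satisfying the Premet identities. -/
def IsExtremal (F : Type*) {L : Type*} [Field F] [LieRing L] [LieAlgebra F L] (x : L) : Prop :=
  x ≠ 0 ∧ ∃ gx : L →ₗ[F] F,
    (∀ y : L, ⁅x, ⁅x, y⁆⁆ = (2 * gx y) • x) ∧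
    (∀ y z : L, ⁅⁅x, y⁆, ⁅x, z⁆⁆ = gx ⁅y, z⁆ • x + gx z • ⁅x, y⁆ - gx y • ⁅x, z⁆) ∧
    (∀ y z : L, ⁅x, ⁅y, ⁅x, z⁆⁆⁆ = gx ⁅y, z⁆ • x - gx z • ⁅x, y⁆ - gx y • ⁅x, z⁆)

namespace LieSubalgebra

open Submodule

variable {R L : Type*} [CommRing R] [LieRing L] [LieAlgebra R L]

theorem coe_lieSpan_eq_span_of_forall_lie_mem_span {s : Set L}
    (hs : ∀ᵉ (a ∈ s) (b ∈ s), ⁅a, b⁆ ∈ span R s) :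
    (lieSpan R L s : Submodule R L) = span R s := by
  suffices ∀ {a b}, a ∈ span R s → b ∈ span R s → ⁅a, b⁆ ∈ span R s by
    refine le_antisymm ?_ submodule_span_le_lieSpan
    change _ ≤ ({ span R s with lie_mem' := this } : LieSubalgebra R L)
    rw [lieSpan_le]
    exact subset_span
  intro a b ha hb
  induction ha, hb using span_induction₂ with
  | mem_mem a b ha hb => exact hs a ha b hb
  | zero_left b _ => simp
  | zero_right a _ => simp
  | add_left a₁ a₂ b _ _ _ h₁ h₂ => simpa only [add_lie] using add_mem h₁ h₂
  | add_right a b₁ b₂ _ _ _ h₁ h₂ => simpa only [lie_add] using add_mem h₁ h₂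
  | smul_left r a b _ _ h => simpa only [smul_lie] using smul_mem _ r h
  | smul_right r a b _ _ h => simpa only [lie_smul] using smul_mem _ r h

theorem coe_lieSpan_pair_eq_span_triple {x y : L}
    (hx : ⁅x, ⁅x, y⁆⁆ ∈ span R {x, y, ⁅x, y⁆}) (hy : ⁅y, ⁅x, y⁆⁆ ∈ span R {x, y, ⁅x, y⁆}) :
    (lieSpan R L {x, y} : Submodule R L) = span R {x, y, ⁅x, y⁆} := by
  have hxy : ⁅x, y⁆ ∈ span R {x, y, ⁅x, y⁆} := subset_span (by simp)
  have hyx : ⁅y, x⁆ ∈ span R {x, y, ⁅x, y⁆} := by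
    rw [← neg_mem_iff, lie_skew]; exact hxy
  have hzx : ⁅⁅x, y⁆, x⁆ ∈ span R {x, y, ⁅x, y⁆} := by
    rw [← neg_mem_iff, lie_skew]; exact hx
  have hzy : ⁅⁅x, y⁆, y⁆ ∈ span R {x, y, ⁅x, y⁆} := by
    rw [← neg_mem_iff, lie_skew]; exact hy
  have htriple : (lieSpan R L {x, y, ⁅x, y⁆} : Submodule R L) = span R {x, y, ⁅x, y⁆} := by
    refine coe_lieSpan_eq_span_of_forall_lie_mem_span ?_
    rintro a (rfl | rfl | rfl) b (rfl | rfl | rfl) <;>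
      simp only [lie_self, zero_mem, hx, hy, hxy, hyx, hzx, hzy]
  refine le_antisymm ?_ ?_
  · rw [← htriple, toSubmodule_le_toSubmodule]
    exact lieSpan_mono (Set.insert_subset_insert (by simp))
  rw [span_le]
  have hx' : x ∈ lieSpan R L {x, y} := subset_lieSpan (by simp)
  have hy' : y ∈ lieSpan R L {x, y} := subset_lieSpan (by simp)
  rintro a (rfl | rfl | rfl)
  exacts [hx', hy', lie_mem _ hx' hy']

end LieSubalgebra

theorem Submodule.span_triple_eq_span_add_add_smul {R M : Type*} [Ring R] [AddCommGroup M]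
    [Module R M] (x y z : M) (c : R) :
    span R {x, y, z} = span R {x, y, y + z + c • x} := by
  have hx (t : M) : x ∈ span R {x, y, t} := subset_span (by simp)
  have hy (t : M) : y ∈ span R {x, y, t} := subset_span (by simp)
  have ht (t : M) : t ∈ span R {x, y, t} := subset_span (by simp)
  apply le_antisymm <;> rw [span_le] <;> rintro a (rfl | rfl | rfl)
  any_goals exact hx _
  any_goals exact hy _
  · have h := sub_mem (sub_mem (ht (y + a + c • x)) (hy _)) (smul_mem _ c (hx _))
    rwa [show y + a + c • x - y - c • x = a by abel] at h
  · exact add_mem (add_mem (hy _) (ht _)) (smul_mem _ c (hx _))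

theorem subalgebra_spanned_by_extremal_general {F : Type*} [Field F] {L : Type*} [LieRing L]
    [LieAlgebra F L]
    (B : L →ₗ[F] L →ₗ[F] F)
    (x y : L) (hx : IsExtremal F x) (hy : IsExtremal F y)
    (hz : IsExtremal F ⁅x, y⁆)
    (hxz : ⁅x, ⁅x, y⁆⁆ = 0) (hyz : ⁅y, ⁅x, y⁆⁆ = 0) :
    (∃ S : Set L, (∀ s ∈ S, IsExtremal F s) ∧
      (LieSubalgebra.lieSpan F L {x, y} : Submodule F L) = Submodule.span F S) ∧
    (LieSubalgebra.lieSpan F L {x, y} : Submodule F L)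
      = Submodule.span F {x, y, y + ⁅x, y⁆ + B x y • x} := by
  have hspan := LieSubalgebra.coe_lieSpan_pair_eq_span_triple (R := F)
    (hxz ▸ Submodule.zero_mem _) (hyz ▸ Submodule.zero_mem _)
  refine ⟨⟨{x, y, ⁅x, y⁆}, ?_, hspan⟩,
    hspan.trans (Submodule.span_triple_eq_span_add_add_smul ..)⟩
  rintro s (rfl | rfl | rfl)
  exacts [hx, hy, hz]

/-- In case (d) of the two-generator classification (`z = [x,y] ≠ 0` extremal
and commuting with `x` and `y`), the subalgebra generated by the extremal elements `x` and
`y` is linearly spanned by extremal elements; more generally, since `x` and `y` do not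
commute, `x`, `y` and `exp(x,1)(y) = y + [x,y] + g_x(y)x` linearly span `⟨x,y⟩`. -/
theorem subalgebra_spanned_by_extremal {F : Type*} [Field F] {L : Type*} [LieRing L]
    [LieAlgebra F L]
    (B : L →ₗ[F] L →ₗ[F] F)
    (hsymm : ∀ a b : L, B a b = B b a)
    (hassoc : ∀ a b c : L, B a ⁅b, c⁆ = B ⁅a, b⁆ c)
    (x y : L) (hx : IsExtremal F x) (hy : IsExtremal F y)
    (hgx : ∀ u : L, ⁅x, ⁅x, u⁆⁆ = (2 * B x u) • x)
    (hgy : ∀ u : L, ⁅y, ⁅y, u⁆⁆ = (2 * B y u) • y)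
    (hne : ⁅x, y⁆ ≠ 0)
    (hz : IsExtremal F ⁅x, y⁆)
    (hxz : ⁅x, ⁅x, y⁆⁆ = 0) (hyz : ⁅y, ⁅x, y⁆⁆ = 0) :
    (∃ S : Set L, (∀ s ∈ S, IsExtremal F s) ∧
      (LieSubalgebra.lieSpan F L {x, y} : Submodule F L) = Submodule.span F S) ∧
    (LieSubalgebra.lieSpan F L {x, y} : Submodule F L)
      = Submodule.span F {x, y, y + ⁅x, y⁆ + B x y • x} :=
  subalgebra_spanned_by_extremal_general B x y hx hy hz hxz hyz
end

section
/- Let g be a Lie algebra over a field F with |F| > 3, generated by extremal elements, with extremal form g. Let x, y be extremal with g(x,y) = 1 and suppose [·,·]₁ is another Lie bracket on the same vector space with extremal form g₁, having the same set of extremal points. Write [x,y]₁ = αx + βy + γ[x,y] with γ ≠ 0. If for every λ ∈ F the element y + λ[x,y]₁ + λ²g₁(x,y)x is extremal for the original bracket (hence its coordinates (a,b,c) in the basis x, y, [x,y] satisfy ab = c²), then α = β = 0 and γ² = g₁(x,y); in particular [x,y]₁ = γ[x,y]. -/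
/-!
Comparing coordinates in the basis `x, y, [x,y]`, the condition `ab = c²` for
`y + λ[x,y]₁ + λ²g₁x` reads `(λα + λ²g₁)(1 + λβ) = λ²γ²` for every `λ`. This is a cubic in `λ`
without constant term, so over a field with more than three elements all of its coefficients
vanish: `α = 0`, `g₁ + αβ = γ²` and `g₁β = 0`; since `g₁ = γ² ≠ 0`, also `β = 0`.
-/

open Cardinal Polynomial

theorem LinearIndependent.eq_of_triple {R M : Type*} [Semiring R] [AddCommMonoid M] [Module R M]
    {u v w : M} (h : LinearIndependent R ![u, v, w]) {a b c a' b' c' : R}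
    (h' : a • u + b • v + c • w = a' • u + b' • v + c' • w) : a = a' ∧ b = b' ∧ c = c' := by
  have hcoords := Fintype.linearIndependent_iffₛ.mp h ![a, b, c] ![a', b', c']
    (by simpa [Fin.sum_univ_three] using h')
  exact ⟨hcoords 0, hcoords 1, hcoords 2⟩

theorem Cardinal.natCast_lt_mk_of_lt_natCard_or_infinite {α : Type*} {n : ℕ}
    (h : n < Nat.card α ∨ Infinite α) : (n : Cardinal) < #α := by
  rcases h with hcard | hinf
  · have : Finite α := Nat.finite_of_card_ne_zero (by omega)
    rwa [← Nat.cast_card, Nat.cast_lt]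
  · exact natCast_lt_aleph0.trans_le (aleph0_le_mk α)

theorem Cubic.eq_zero_of_forall_eval_toPoly_eq_zero {R : Type*} [CommRing R] [IsDomain R]
    (hR : (3 : Cardinal) < #R) {P : Cubic R} (h : ∀ t, P.toPoly.eval t = 0) : P = 0 :=
  (toPoly_eq_zero_iff P).mp <| eq_zero_of_forall_eval_zero_of_natDegree_lt_card _ h <|
    (Nat.cast_le.mpr natDegree_cubic_le).trans_lt hR

theorem second_bracket_scalar_on_sl2_general {F : Type*} [Field F] {L : Type*} [LieRing L]
    [LieAlgebra F L]
    (hF : 3 < Nat.card F ∨ Infinite F)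
    (x y : L)
    (hli : LinearIndependent F ![x, y, ⁅x, y⁆])
    (b1 : L) (α β γ g1 : F)
    (hb1 : b1 = α • x + β • y + γ • ⁅x, y⁆) (hγ : γ ≠ 0)
    (hext : ∀ lam : F, ∃ a b c : F,
      y + lam • b1 + (lam ^ 2 * g1) • x = a • x + b • y + c • ⁅x, y⁆ ∧ a * b = c ^ 2) :
    α = 0 ∧ β = 0 ∧ γ ^ 2 = g1 ∧ b1 = γ • ⁅x, y⁆ := by
  have hcoords (lam : F) : (lam * α + lam ^ 2 * g1) * (1 + lam * β) = (lam * γ) ^ 2 := by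
    obtain ⟨a, b, c, hsum, habc⟩ := hext lam
    obtain ⟨rfl, rfl, rfl⟩ := hli.eq_of_triple
      (a := lam * α + lam ^ 2 * g1) (b := 1 + lam * β) (c := lam * γ)
      (by rw [← hsum, hb1]; module)
    exact habc
  have hcubic : (⟨g1 * β, g1 + α * β - γ ^ 2, α, 0⟩ : Cubic F) = 0 :=
    Cubic.eq_zero_of_forall_eval_toPoly_eq_zero
      (by exact_mod_cast natCast_lt_mk_of_lt_natCard_or_infinite hF) fun t => by
        simp only [Cubic.toPoly, eval_add, eval_mul, eval_C, eval_X, eval_pow]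
        linear_combination hcoords t
  obtain ⟨hg1β, hquad, hα, -⟩ : g1 * β = 0 ∧ g1 + α * β - γ ^ 2 = 0 ∧ α = 0 ∧ _ :=
    Cubic.ext_iff.mp hcubic
  have hg1 : γ ^ 2 = g1 := by linear_combination β * hα - hquad
  have hβ : β = 0 := (mul_eq_zero.mp hg1β).resolve_left (hg1 ▸ pow_ne_zero 2 hγ)
  refine ⟨hα, hβ, hg1, ?_⟩
  rw [hb1, hα, hβ, zero_smul, zero_smul, zero_add, zero_add]

/-- Over a field with `|F| > 3`, let `x, y` be extremal with `g(x,y) = 1`,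
let `b₁ = [x,y]₁ = αx + βy + γ[x,y]` (γ ≠ 0) be the value of a second bracket, and let
`g₁ = g₁(x,y)`. If for every `λ ∈ F` the element `y + λ[x,y]₁ + λ²g₁(x,y)x` is extremal
for the original bracket, i.e. its coordinates `(a,b,c)` in the basis `x, y, [x,y]`
satisfy `ab = c²`, then `α = β = 0`, `γ² = g₁(x,y)`, and `[x,y]₁ = γ[x,y]`. -/
theorem second_bracket_scalar_on_sl2 {F : Type*} [Field F] {L : Type*} [LieRing L]
    [LieAlgebra F L]
    (hF : 3 < Nat.card F ∨ Infinite F)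
    (x y : L) (hx : IsExtremal F x) (hy : IsExtremal F y)
    (B : L →ₗ[F] L →ₗ[F] F) (hBxy : B x y = 1)
    (hBext : ∀ u : L, ⁅x, ⁅x, u⁆⁆ = (2 * B x u) • x)
    (hli : LinearIndependent F ![x, y, ⁅x, y⁆])
    (b1 : L) (α β γ g1 : F)
    (hb1 : b1 = α • x + β • y + γ • ⁅x, y⁆) (hγ : γ ≠ 0)
    (hext : ∀ lam : F, ∃ a b c : F,
      y + lam • b1 + (lam ^ 2 * g1) • x = a • x + b • y + c • ⁅x, y⁆ ∧ a * b = c ^ 2) :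
    α = 0 ∧ β = 0 ∧ γ ^ 2 = g1 ∧ b1 = γ • ⁅x, y⁆ :=
  second_bracket_scalar_on_sl2_general hF x y hli b1 α β γ g1 hb1 hγ hext
end

section
/- Let g be a Lie algebra, x an extremal element, and y₁, y₂, y₃ elements with y₁ + y₂ + y₃ = 0, [x,y₁] ≠ 0 ≠ [x,y₂], and suppose there exist scalars λ₁, λ₂, λ₃ ∈ F* and a second bracket [·,·]₁ with [x,y_i]₁ = λ_i[x,y_i] for i = 1,2,3, and with the property that [x,z] = 0 implies [x,z]₁ = 0 for z in the span of y₁,y₂. If λ₁ ≠ λ₂ then the element z := (λ₁−λ₃)y₁ + (λ₂−λ₃)y₂ is nonzero, satisfies [x,z] = 0 and [x,z]₁ = 0, and writing y₂ = μ₁y₁ + μ₂z yields [x,y₂]₁ = λ₁[x,y₂], a contradiction; hence λ₁ = λ₂. -/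
/-!
Eliminating `y₃ = -(y₁ + y₂)` turns the condition on `y₃` into `[x, z] = 0` for
`z = (λ₁ - λ₃) y₁ + (λ₂ - λ₃) y₂`. Then `[x, z]₁ - λ₁ [x, z] = (λ₂ - λ₁)(λ₂ - λ₃) [x, y₂]`
vanishes, so `λ₂ = λ₁` or `λ₂ = λ₃`; in the latter case `[x, z] = (λ₁ - λ₃) [x, y₁]`
forces `λ₁ = λ₃` as well.
-/

namespace LinearMap

section CommRing

variable {R M N : Type*} [CommRing R] [AddCommGroup M] [Module R M] [AddCommGroup N]
  [Module R N] {f b : M →ₗ[R] N} {v₁ v₂ : M} {l₁ l₂ l₃ : R}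

theorem apply_sub_smul_add_sub_smul_eq_zero (e₁ : b v₁ = l₁ • f v₁) (e₂ : b v₂ = l₂ • f v₂)
    (e₃ : b (v₁ + v₂) = l₃ • f (v₁ + v₂)) :
    f ((l₁ - l₃) • v₁ + (l₂ - l₃) • v₂) = 0 := by
  rw [map_add, e₁, e₂, map_add, smul_add] at e₃
  simp only [map_add, map_smul]
  linear_combination (norm := module) e₃

end CommRing

variable {K M N : Type*} [Field K] [AddCommGroup M] [Module K M] [AddCommGroup N]
  [Module K N] {f b : M →ₗ[K] N} {v₁ v₂ : M} {l₁ l₂ l₃ : K}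

theorem eq_of_apply_eq_smul_of_forall_mem_span (h₁ : f v₁ ≠ 0) (h₂ : f v₂ ≠ 0)
    (e₁ : b v₁ = l₁ • f v₁) (e₂ : b v₂ = l₂ • f v₂) (e₃ : b (v₁ + v₂) = l₃ • f (v₁ + v₂))
    (hker : ∀ z ∈ Submodule.span K {v₁, v₂}, f z = 0 → b z = 0) :
    l₁ = l₂ := by
  have hfz := apply_sub_smul_add_sub_smul_eq_zero e₁ e₂ e₃
  have hz_mem : (l₁ - l₃) • v₁ + (l₂ - l₃) • v₂ ∈ Submodule.span K {v₁, v₂} :=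
    Submodule.add_mem _ (Submodule.smul_mem _ _ (Submodule.subset_span (by simp)))
      (Submodule.smul_mem _ _ (Submodule.subset_span (by simp)))
  have hbz := hker _ hz_mem hfz
  simp only [map_add, map_smul, e₁, e₂] at hfz hbz
  have hprod : ((l₂ - l₁) * (l₂ - l₃)) • f v₂ = 0 := by
    linear_combination (norm := module) hbz - l₁ • hfz
  rcases mul_eq_zero.mp ((smul_eq_zero_iff_left h₂).mp hprod) with h21 | h23
  · exact (sub_eq_zero.mp h21).symm
  · rw [← sub_eq_zero.mp h23, sub_self, zero_smul, add_zero,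
      smul_eq_zero_iff_left h₁, sub_eq_zero] at hfz
    rw [hfz, sub_eq_zero.mp h23]

end LinearMap

theorem scalar_matching_general {F : Type*} [Field F] {L : Type*} [LieRing L] [LieAlgebra F L]
    (x y₁ y₂ y₃ : L) (b1 : L →ₗ[F] L)
    (hsum : y₁ + y₂ + y₃ = 0)
    (h1 : ⁅x, y₁⁆ ≠ 0) (h2 : ⁅x, y₂⁆ ≠ 0)
    (lam₁ lam₂ lam₃ : F)
    (e1 : b1 y₁ = lam₁ • ⁅x, y₁⁆) (e2 : b1 y₂ = lam₂ • ⁅x, y₂⁆)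
    (e3 : b1 y₃ = lam₃ • ⁅x, y₃⁆)
    (hkill : ∀ z ∈ Submodule.span F ({y₁, y₂} : Set L), ⁅x, z⁆ = 0 → b1 z = 0) :
    lam₁ = lam₂ := by
  obtain rfl : y₃ = -(y₁ + y₂) := eq_neg_of_add_eq_zero_right hsum
  have e3' : b1 (y₁ + y₂) = lam₃ • ⁅x, y₁ + y₂⁆ := by
    simpa only [map_neg, lie_neg, smul_neg, neg_inj] using e3
  exact LinearMap.eq_of_apply_eq_smul_of_forall_mem_span (f := LieAlgebra.ad F L x)
    h1 h2 e1 e2 e3' hkill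

/-- Scalar-matching lemma. Let `x, y₁, y₂, y₃` with `y₁ + y₂ + y₃ = 0`,
`[x,y₁] ≠ 0 ≠ [x,y₂]`, and let `b₁` be (the `[x,·]`-component of) a second bracket with
`b₁(y_i) = λ_i[x,y_i]` for nonzero scalars `λ_i`, such that `b₁` kills every element of
the span of `y₁, y₂` killed by `[x,·]`. Then `λ₁ = λ₂`. -/
theorem scalar_matching {F : Type*} [Field F] {L : Type*} [LieRing L] [LieAlgebra F L]
    (x y₁ y₂ y₃ : L) (b1 : L →ₗ[F] L)
    (hsum : y₁ + y₂ + y₃ = 0)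
    (h1 : ⁅x, y₁⁆ ≠ 0) (h2 : ⁅x, y₂⁆ ≠ 0)
    (hli : LinearIndependent F ![y₁, y₂])
    (lam₁ lam₂ lam₃ : F) (hl1 : lam₁ ≠ 0) (hl2 : lam₂ ≠ 0) (hl3 : lam₃ ≠ 0)
    (e1 : b1 y₁ = lam₁ • ⁅x, y₁⁆) (e2 : b1 y₂ = lam₂ • ⁅x, y₂⁆)
    (e3 : b1 y₃ = lam₃ • ⁅x, y₃⁆)
    (hkill : ∀ z ∈ Submodule.span F ({y₁, y₂} : Set L), ⁅x, z⁆ = 0 → b1 z = 0) :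
    lam₁ = lam₂ :=
  scalar_matching_general x y₁ y₂ y₃ b1 hsum h1 h2 lam₁ lam₂ lam₃ e1 e2 e3 hkill
end

section
/- Let g be a Lie algebra over a field F of characteristic ≠ 2 generated by its extremal elements, with extremal form g. Let x be extremal and y₁, y₂ extremal elements spanning a line all of whose nonzero elements are extremal (so y₁ + y₂ is extremal or zero times scalars, i.e., (y₁,y₂) ∈ E_{−1}). Suppose a second Lie bracket [·,·]₁ on g satisfies: for each extremal z there is λ_z ∈ F* with [x,z]₁ = λ_z[x,z] whenever [x,z] ≠ 0, and [x,z]₁ = 0 whenever [x,z] = 0. Then there is a single λ ∈ F* with [x,y₁]₁ = λ[x,y₁] and [x,y₂]₁ = λ[x,y₂]. -/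
/-!
Write `f = [x,·]₁` and `g = [x,·]`. Every vector `v` of the line spanned by `y₁, y₂` satisfies
`f v = λ_v g v` for some `λ_v ≠ 0` (for `v = 0` or `g v = 0` any `λ_v` will do). If `g y₁` and
`g y₂` are linearly independent, comparing coefficients in `f (y₁ + y₂) = λ (g y₁ + g y₂)` gives
`λ_{y₁} = λ_{y₂}`. If instead `g y₂ = c g y₁` with `c ≠ 0`, then `g (c y₁ - y₂) = 0`, so
`f (c y₁ - y₂) = c (λ_{y₁} - λ_{y₂}) g y₁` vanishes, and again `λ_{y₁} = λ_{y₂}`.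
-/

section ProportionalMaps

variable {F V W : Type*} [Field F] [AddCommGroup V] [Module F V] [AddCommGroup W] [Module F W]
  {f g : V →ₗ[F] W} {y₁ y₂ : V} {l₁ l₂ : F}

theorem scalar_eq_of_linearIndependent (hg : LinearIndependent F ![g y₁, g y₂])
    (h₁ : f y₁ = l₁ • g y₁) (h₂ : f y₂ = l₂ • g y₂) {l : F}
    (h : f (y₁ + y₂) = l • g (y₁ + y₂)) : l₁ = l₂ := by
  have hrel : (l₁ - l) • g y₁ + (l₂ - l) • g y₂ = 0 := by
    rw [map_add, map_add, h₁, h₂] at h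
    linear_combination (norm := module) h
  obtain ⟨e₁, e₂⟩ := LinearIndependent.pair_iff.mp hg _ _ hrel
  rw [sub_eq_zero.mp e₁, sub_eq_zero.mp e₂]

theorem scalar_eq_of_eq_smul (hg₁ : g y₁ ≠ 0) {c : F} (hc : c ≠ 0) (hg : g y₂ = c • g y₁)
    (h₁ : f y₁ = l₁ • g y₁) (h₂ : f y₂ = l₂ • g y₂) {l : F}
    (h : f (c • y₁ - y₂) = l • g (c • y₁ - y₂)) : l₁ = l₂ := by
  have hrel : (c * (l₁ - l₂)) • g y₁ = 0 := by
    rw [map_sub, map_sub, map_smul, map_smul, h₁, h₂, hg, sub_self, smul_zero] at h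
    linear_combination (norm := module) h
  simpa [hc, hg₁, sub_eq_zero] using hrel

theorem exists_common_scalar_of_forall_smul
    (h : ∀ a b : F, ∃ l : F, l ≠ 0 ∧ f (a • y₁ + b • y₂) = l • g (a • y₁ + b • y₂)) :
    ∃ l : F, l ≠ 0 ∧ f y₁ = l • g y₁ ∧ f y₂ = l • g y₂ := by
  obtain ⟨l₁, hl₁, h₁⟩ : ∃ l : F, l ≠ 0 ∧ f y₁ = l • g y₁ := by simpa using h 1 0
  obtain ⟨l₂, hl₂, h₂⟩ : ∃ l : F, l ≠ 0 ∧ f y₂ = l • g y₂ := by simpa using h 0 1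
  by_cases hg₁ : g y₁ = 0
  · exact ⟨l₂, hl₂, by simp [h₁, hg₁], h₂⟩
  by_cases hg₂ : g y₂ = 0
  · exact ⟨l₁, hl₁, h₁, by simp [h₂, hg₂]⟩
  suffices l₁ = l₂ from ⟨l₁, hl₁, h₁, this ▸ h₂⟩
  by_cases hind : LinearIndependent F ![g y₁, g y₂]
  · obtain ⟨l, -, h⟩ := h 1 1
    rw [one_smul, one_smul] at h
    exact scalar_eq_of_linearIndependent hind h₁ h₂ h
  · obtain ⟨c, hc⟩ : ∃ c : F, c • g y₁ = g y₂ := by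
      simpa [LinearIndependent.pair_iff' hg₁] using hind
    have hc0 : c ≠ 0 := by rintro rfl; exact hg₂ (by simp [← hc])
    obtain ⟨l, -, h⟩ := h c (-1)
    rw [neg_one_smul, ← sub_eq_add_neg] at h
    exact scalar_eq_of_eq_smul hg₁ hc0 hc.symm h₁ h₂ h

end ProportionalMaps

theorem constant_scalar_on_line_general {F : Type*} [Field F] {L : Type*} [LieRing L]
    [LieAlgebra F L]
    (x y₁ y₂ : L)
    (hline : ∀ a b : F, a • y₁ + b • y₂ ≠ 0 → IsExtremal F (a • y₁ + b • y₂))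
    (Br : L →ₗ[F] L →ₗ[F] L)
    (hscal : ∀ z : L, IsExtremal F z →
      (⁅x, z⁆ ≠ 0 → ∃ lam : F, lam ≠ 0 ∧ Br x z = lam • ⁅x, z⁆) ∧
      (⁅x, z⁆ = 0 → Br x z = 0)) :
    ∃ lam : F, lam ≠ 0 ∧ Br x y₁ = lam • ⁅x, y₁⁆ ∧ Br x y₂ = lam • ⁅x, y₂⁆ := by
  have hprop : ∀ a b : F, ∃ lam : F, lam ≠ 0 ∧
      Br x (a • y₁ + b • y₂) = lam • LieAlgebra.ad F L x (a • y₁ + b • y₂) := by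
    intro a b
    rw [LieAlgebra.ad_apply]
    by_cases hz : a • y₁ + b • y₂ = 0
    · exact ⟨1, one_ne_zero, by simp [hz]⟩
    obtain ⟨hne, heq⟩ := hscal _ (hline a b hz)
    by_cases hxz : ⁅x, a • y₁ + b • y₂⁆ = 0
    · exact ⟨1, one_ne_zero, by simp [heq hxz, hxz]⟩
    · exact hne hxz
  simpa using exists_common_scalar_of_forall_smul hprop

/-- Let `x` be extremal and `y₁, y₂` extremal elements spanning a line all
of whose nonzero elements are extremal. If a second Lie bracket `Br` agrees with `[x,·]`
up to a nonzero scalar on each extremal `z` with `[x,z] ≠ 0`, and vanishes on extremal `z`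
with `[x,z] = 0`, then a single scalar `λ` works for both `y₁` and `y₂`. -/
theorem constant_scalar_on_line {F : Type*} [Field F] {L : Type*} [LieRing L]
    [LieAlgebra F L] (hchar : (2 : F) ≠ 0)
    (x y₁ y₂ : L)
    (hx : IsExtremal F x) (hy₁ : IsExtremal F y₁) (hy₂ : IsExtremal F y₂)
    (hli : LinearIndependent F ![y₁, y₂]) (hcomm : ⁅y₁, y₂⁆ = 0)
    (hline : ∀ a b : F, a • y₁ + b • y₂ ≠ 0 → IsExtremal F (a • y₁ + b • y₂))
    (Br : L →ₗ[F] L →ₗ[F] L)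
    (halt : ∀ z : L, Br z z = 0)
    (hjac : ∀ a b c : L, Br a (Br b c) + Br b (Br c a) + Br c (Br a b) = 0)
    (hscal : ∀ z : L, IsExtremal F z →
      (⁅x, z⁆ ≠ 0 → ∃ lam : F, lam ≠ 0 ∧ Br x z = lam • ⁅x, z⁆) ∧
      (⁅x, z⁆ = 0 → Br x z = 0)) :
    ∃ lam : F, lam ≠ 0 ∧ Br x y₁ = lam • ⁅x, y₁⁆ ∧ Br x y₂ = lam • ⁅x, y₂⁆ :=
  constant_scalar_on_line_general x y₁ y₂ hline Br hscal
end
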